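/- Take k₁ = k₂ = k with k ≤ t₁ and k ≤ t₂. Then for every s ∈ ℕ and all x, y ∈ ℂ, 𝓕₂⁽¹⁾(a + s, b₁, b₂; c₁, c₂; t₁, t₂, k, k, x, y) = 𝓕₂⁽¹⁾(a, b₁, b₂; c₁, c₂; t₁, t₂, k, k, x, y) + ((−1)^k (−t₁)_k b₁ x / c₁) · Σ_{r=1}^{s} 𝓕₂⁽¹⁾(a + r, b₁ + 1, b₂; c₁ + 1, c₂; t₁ − k, t₂, k, k, x, y) + ((−1)^k (−t₂)_k b₂ y / c₂) · Σ_{r=1}^{s} 𝓕₂⁽¹⁾(a + r, b₁, b₂ + 1; c₁, c₂ + 1; t₁, t₂ − k, k, k, x, y). -/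
import Mathlib


open Complex Finset

/-- Ascending Pochhammer symbol `(z)_j = z (z+1) ⋯ (z+j−1)`, with `(z)_0 = 1`. -/
noncomputable def poch (z : ℂ) (j : ℕ) : ℂ := (ascPochhammer ℂ j).eval z

/-- The first discrete Appell function `𝓕₂⁽¹⁾(a,b₁,b₂;c₁,c₂;t₁,t₂,k₁,k₂,x,y)`.
Since `(−t₁)_{m k₁} = 0` once `m k₁ > t₁` and `(−t₂)_{n k₂} = 0` once `n k₂ > t₂`
(for `k₁, k₂ ≥ 1`), the doubly infinite sum reduces to this finite sum. -/
noncomputable def F2one (a b₁ b₂ c₁ c₂ : ℂ) (t₁ t₂ k₁ k₂ : ℕ) (x y : ℂ) : ℂ :=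
  ∑ m ∈ Finset.range (t₁ + 1), ∑ n ∈ Finset.range (t₂ + 1),
    poch a (m + n) * poch b₁ m * poch b₂ n * (-1 : ℂ) ^ (m * k₁) * poch (-(t₁ : ℂ)) (m * k₁)
      * (-1 : ℂ) ^ (n * k₂) * poch (-(t₂ : ℂ)) (n * k₂) * x ^ m * y ^ n
    / (poch c₁ m * poch c₂ n * (Nat.factorial m : ℂ) * (Nat.factorial n : ℂ))

lemma poch_zero (z : ℂ) : poch z 0 = 1 := by simp [poch]

lemma poch_succ_right (z : ℂ) (n : ℕ) : poch z (n+1) = poch z n * (z + n) :=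
  ascPochhammer_succ_eval n z

lemma poch_succ_left (z : ℂ) (n : ℕ) : poch z (n+1) = z * poch (z+1) n := by
  simp [poch, ascPochhammer_succ_left, Polynomial.eval_comp]

lemma poch_add (z : ℂ) (i j : ℕ) : poch z (i + j) = poch z i * poch (z + i) j := by
  have := congrArg (Polynomial.eval z) (ascPochhammer_mul ℂ i j)
  simpa [poch, Polynomial.eval_comp] using this.symm

lemma poch_neg_eq_zero {t j : ℕ} (h : t < j) : poch (-(t:ℂ)) j = 0 := by
  obtain ⟨d, rfl⟩ := Nat.exists_eq_add_of_lt h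
  rw [show t + d + 1 = (t + 1) + d by ring, poch_add, poch_succ_right]
  simp

lemma poch_ne_zero {c : ℂ} (hc : ∀ n : ℕ, c ≠ -(n:ℂ)) (m : ℕ) : poch c m ≠ 0 := by
  induction m with
  | zero => simp [poch_zero]
  | succ n ih =>
    rw [poch_succ_right]
    refine mul_ne_zero ih ?_
    intro h
    exact hc n (by linear_combination h)

lemma poch_diff (z : ℂ) (j : ℕ) :
    poch (z+1) j = poch z j + (j:ℂ) * poch (z+1) (j-1) := by
  cases j with
  | zero => simp [poch_zero]
  | succ j =>
    rw [poch_succ_right, poch_succ_left]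
    simp only [Nat.add_sub_cancel]
    push_cast
    ring

lemma step (a b₁ b₂ c₁ c₂ : ℂ) (k : ℕ) (hk : 0 < k)
    (hc₁ : ∀ n : ℕ, c₁ ≠ -(n : ℂ)) (hc₂ : ∀ n : ℕ, c₂ ≠ -(n : ℂ))
    (t₁ t₂ : ℕ) (hkt₁ : k ≤ t₁) (hkt₂ : k ≤ t₂) (x y : ℂ) :
    F2one (a+1) b₁ b₂ c₁ c₂ t₁ t₂ k k x y
      = F2one a b₁ b₂ c₁ c₂ t₁ t₂ k k x y
        + (-1:ℂ)^k * poch (-(t₁:ℂ)) k * b₁ * x / c₁ *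
            F2one (a+1) (b₁+1) b₂ (c₁+1) c₂ (t₁-k) t₂ k k x y
        + (-1:ℂ)^k * poch (-(t₂:ℂ)) k * b₂ * y / c₂ *
            F2one (a+1) b₁ (b₂+1) c₁ (c₂+1) t₁ (t₂-k) k k x y := by
  have hc₁0 : c₁ ≠ 0 := by simpa using hc₁ 0
  have hc₂0 : c₂ ≠ 0 := by simpa using hc₂ 0
  have hc₁' : ∀ n : ℕ, c₁ + 1 ≠ -(n:ℂ) := by
    intro n h; apply hc₁ (n+1); push_cast; linear_combination h
  have hc₂' : ∀ n : ℕ, c₂ + 1 ≠ -(n:ℂ) := by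
    intro n h; apply hc₂ (n+1); push_cast; linear_combination h
  -- the "derivative" kernels
  set W : ℕ → ℕ → ℂ := fun m n =>
    poch (a+1) (m + n - 1) * poch b₁ m * poch b₂ n * (-1:ℂ)^(m*k) * poch (-(t₁:ℂ)) (m*k)
      * (-1:ℂ)^(n*k) * poch (-(t₂:ℂ)) (n*k) * x^m * y^n
    / (poch c₁ m * poch c₂ n * (Nat.factorial m : ℂ) * (Nat.factorial n : ℂ)) with hW
  have split : F2one (a+1) b₁ b₂ c₁ c₂ t₁ t₂ k k x y
      = F2one a b₁ b₂ c₁ c₂ t₁ t₂ k k x y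
        + (∑ m ∈ Finset.range (t₁+1), ∑ n ∈ Finset.range (t₂+1), (m:ℂ) * W m n)
        + (∑ m ∈ Finset.range (t₁+1), ∑ n ∈ Finset.range (t₂+1), (n:ℂ) * W m n) := by
    rw [F2one, F2one, ← Finset.sum_add_distrib, ← Finset.sum_add_distrib]
    refine Finset.sum_congr rfl fun m _ => ?_
    rw [← Finset.sum_add_distrib, ← Finset.sum_add_distrib]
    refine Finset.sum_congr rfl fun n _ => ?_
    rw [poch_diff a (m+n), hW]
    push_cast
    ring
  have hsub1 : Finset.range (t₁ - k + 1) ⊆ Finset.range t₁ := by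
    apply Finset.range_subset_range.mpr; omega
  have hsub2 : Finset.range (t₂ - k + 1) ⊆ Finset.range t₂ := by
    apply Finset.range_subset_range.mpr; omega
  have hA : (∑ m ∈ Finset.range (t₁+1), ∑ n ∈ Finset.range (t₂+1), (m:ℂ) * W m n)
      = (-1:ℂ)^k * poch (-(t₁:ℂ)) k * b₁ * x / c₁ *
          F2one (a+1) (b₁+1) b₂ (c₁+1) c₂ (t₁-k) t₂ k k x y := by
    rw [Finset.sum_range_succ']
    have h0 : (∑ n ∈ Finset.range (t₂+1), ((0:ℕ):ℂ) * W 0 n) = 0 := by simp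
    rw [h0, add_zero]
    rw [← Finset.sum_subset hsub1 (by
      intro m _ hm
      rw [Finset.mem_range, not_lt] at hm
      have hmk : m ≤ m * k := Nat.le_mul_of_pos_right m hk
      have hlt : t₁ < (m+1)*k := by
        have h' : (m+1)*k = m*k + k := by ring
        omega
      refine Finset.sum_eq_zero fun n _ => ?_
      rw [hW]
      simp only []
      rw [poch_neg_eq_zero hlt]
      simp)]
    rw [F2one, Finset.mul_sum]
    refine Finset.sum_congr rfl fun m hm => ?_
    rw [Finset.mul_sum]
    refine Finset.sum_congr rfl fun n hn => ?_
    rw [hW]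
    simp only []
    rw [show m + 1 + n - 1 = m + n from by omega]
    have hfne : ∀ j : ℕ, ((Nat.factorial j : ℕ):ℂ) ≠ 0 :=
      fun j => Nat.cast_ne_zero.mpr (Nat.factorial_ne_zero j)
    have hD1 : poch c₁ (m+1) * poch c₂ n * ((Nat.factorial (m+1) : ℕ):ℂ)
        * ((Nat.factorial n : ℕ):ℂ) ≠ 0 :=
      mul_ne_zero (mul_ne_zero (mul_ne_zero (poch_ne_zero hc₁ _) (poch_ne_zero hc₂ _))
        (hfne _)) (hfne _)
    have hD2 : c₁ * (poch (c₁+1) m * poch c₂ n * ((Nat.factorial m : ℕ):ℂ)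
        * ((Nat.factorial n : ℕ):ℂ)) ≠ 0 :=
      mul_ne_zero hc₁0 (mul_ne_zero (mul_ne_zero (mul_ne_zero (poch_ne_zero hc₁' _)
        (poch_ne_zero hc₂ _)) (hfne _)) (hfne _))
    rw [div_mul_div_comm, ← mul_div_assoc, div_eq_div_iff hD1 hD2]
    have e5 : poch (-(t₁:ℂ)) (k + m*k) = poch (-(t₁:ℂ)) k * poch (-((t₁-k:ℕ):ℂ)) (m*k) := by
      rw [poch_add]; congr 2; push_cast [Nat.cast_sub hkt₁]; ring
    rw [show (m+1)*k = k + m*k from by ring, e5, poch_succ_left b₁, poch_succ_left c₁,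
      pow_add, pow_succ, Nat.factorial_succ]
    push_cast
    ring
  have hB : (∑ m ∈ Finset.range (t₁+1), ∑ n ∈ Finset.range (t₂+1), (n:ℂ) * W m n)
      = (-1:ℂ)^k * poch (-(t₂:ℂ)) k * b₂ * y / c₂ *
          F2one (a+1) b₁ (b₂+1) c₁ (c₂+1) t₁ (t₂-k) k k x y := by
    have hswap : F2one (a+1) b₁ (b₂+1) c₁ (c₂+1) t₁ (t₂-k) k k x y
        = ∑ n ∈ Finset.range (t₂-k+1), ∑ m ∈ Finset.range (t₁+1),
            poch (a+1) (m + n) * poch b₁ m * poch (b₂+1) n * (-1 : ℂ) ^ (m * k)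
              * poch (-(t₁ : ℂ)) (m * k) * (-1 : ℂ) ^ (n * k) * poch (-((t₂-k:ℕ) : ℂ)) (n * k)
              * x ^ m * y ^ n
            / (poch c₁ m * poch (c₂+1) n * (Nat.factorial m : ℂ) * (Nat.factorial n : ℂ)) := by
      rw [F2one]; exact Finset.sum_comm
    rw [hswap, Finset.sum_comm, Finset.sum_range_succ']
    have h0 : (∑ m ∈ Finset.range (t₁+1), ((0:ℕ):ℂ) * W m 0) = 0 := by simp
    rw [h0, add_zero]
    rw [← Finset.sum_subset hsub2 (by
      intro n _ hn
      rw [Finset.mem_range, not_lt] at hn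
      have hnk : n ≤ n * k := Nat.le_mul_of_pos_right n hk
      have hlt : t₂ < (n+1)*k := by
        have h' : (n+1)*k = n*k + k := by ring
        omega
      refine Finset.sum_eq_zero fun m _ => ?_
      rw [hW]
      simp only []
      rw [poch_neg_eq_zero hlt]
      simp)]
    rw [Finset.mul_sum]
    refine Finset.sum_congr rfl fun n hn => ?_
    rw [Finset.mul_sum]
    refine Finset.sum_congr rfl fun m hm => ?_
    rw [hW]
    simp only []
    rw [show m + (n + 1) - 1 = m + n from by omega]
    have hfne : ∀ j : ℕ, ((Nat.factorial j : ℕ):ℂ) ≠ 0 :=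
      fun j => Nat.cast_ne_zero.mpr (Nat.factorial_ne_zero j)
    have hD1 : poch c₁ m * poch c₂ (n+1) * ((Nat.factorial m : ℕ):ℂ)
        * ((Nat.factorial (n+1) : ℕ):ℂ) ≠ 0 :=
      mul_ne_zero (mul_ne_zero (mul_ne_zero (poch_ne_zero hc₁ _) (poch_ne_zero hc₂ _))
        (hfne _)) (hfne _)
    have hD2 : c₂ * (poch c₁ m * poch (c₂+1) n * ((Nat.factorial m : ℕ):ℂ)
        * ((Nat.factorial n : ℕ):ℂ)) ≠ 0 :=
      mul_ne_zero hc₂0 (mul_ne_zero (mul_ne_zero (mul_ne_zero (poch_ne_zero hc₁ _)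
        (poch_ne_zero hc₂' _)) (hfne _)) (hfne _))
    rw [div_mul_div_comm, ← mul_div_assoc, div_eq_div_iff hD1 hD2]
    have e5 : poch (-(t₂:ℂ)) (k + n*k) = poch (-(t₂:ℂ)) k * poch (-((t₂-k:ℕ):ℂ)) (n*k) := by
      rw [poch_add]; congr 2; push_cast [Nat.cast_sub hkt₂]; ring
    rw [show (n+1)*k = k + n*k from by ring, e5, poch_succ_left b₂, poch_succ_left c₂,
      pow_add, pow_succ, Nat.factorial_succ]
    push_cast
    ring
  rw [split, hA, hB]


/-- The recursion formula (paper's (6.1)) with `k₁ = k₂ = k`, `k ≤ t₁`, `k ≤ t₂`: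
`𝓕₂⁽¹⁾(a+s) = 𝓕₂⁽¹⁾(a)
 + ((−1)^k (−t₁)_k b₁ x / c₁) Σ_{r=1}^{s} 𝓕₂⁽¹⁾(a+r, b₁+1, b₂; c₁+1, c₂; t₁−k, t₂)
 + ((−1)^k (−t₂)_k b₂ y / c₂) Σ_{r=1}^{s} 𝓕₂⁽¹⁾(a+r, b₁, b₂+1; c₁, c₂+1; t₁, t₂−k)`. -/
theorem recursion_formula_a (a b₁ b₂ c₁ c₂ : ℂ) (k : ℕ) (hk : 0 < k)
    (hc₁ : ∀ n : ℕ, c₁ ≠ -(n : ℂ)) (hc₂ : ∀ n : ℕ, c₂ ≠ -(n : ℂ))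
    (t₁ t₂ : ℕ) (hkt₁ : k ≤ t₁) (hkt₂ : k ≤ t₂) (s : ℕ) (x y : ℂ) :
    F2one (a + s) b₁ b₂ c₁ c₂ t₁ t₂ k k x y =
      F2one a b₁ b₂ c₁ c₂ t₁ t₂ k k x y +
        (-1 : ℂ) ^ k * poch (-(t₁ : ℂ)) k * b₁ * x / c₁ *
          ∑ r ∈ Finset.Icc 1 s,
            F2one (a + r) (b₁ + 1) b₂ (c₁ + 1) c₂ (t₁ - k) t₂ k k x y +
        (-1 : ℂ) ^ k * poch (-(t₂ : ℂ)) k * b₂ * y / c₂ *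
          ∑ r ∈ Finset.Icc 1 s,
            F2one (a + r) b₁ (b₂ + 1) c₁ (c₂ + 1) t₁ (t₂ - k) k k x y := by
  induction s with
  | zero => simp
  | succ s ih =>
    have hcast : a + ((s+1:ℕ):ℂ) = (a + s) + 1 := by push_cast; ring
    rw [hcast, step (a + s) b₁ b₂ c₁ c₂ k hk hc₁ hc₂ t₁ t₂ hkt₁ hkt₂ x y, ih,
      Finset.sum_Icc_succ_top (by omega : 1 ≤ s + 1),
      Finset.sum_Icc_succ_top (by omega : 1 ≤ s + 1), hcast]
    ring
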